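/- For smooth functions F, G on the cotangent bundle T*Q with canonical symplectic form ω = -dA (A the canonical one-form) and Hamiltonian vector fields X_F, X_G, one has d(F - ι_{X_F}A)·X_G - d(G - ι_{X_G}A)·X_F = {F,G} - ι_{X_{F,G}}A, where {F,G} = ω(X_F, X_G). In particular, the map F ↦ (X_F, F - ι_{X_F}A) is a Lie algebra homomorphism from (C^∞(T*Q), {·,·}) to the semidirect-product Lie algebra of vector fields and functions with bracket [(X₁,φ₁),(X₂,φ₂)] = ([X₂,X₁], dφ₁·X₂ - dφ₂·X₁). -/

import Mathlib

open scoped ContDiff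

/-- Partial derivative in the first (`q`) variable on phase space `T*ℝ ≅ ℝ × ℝ`. -/
noncomputable def pd1 {E : Type*} [NormedAddCommGroup E] [NormedSpace ℝ E]
    (f : ℝ × ℝ → E) (z : ℝ × ℝ) : E := fderiv ℝ f z (1, 0)

/-- Partial derivative in the second (`p`) variable. -/
noncomputable def pd2 {E : Type*} [NormedAddCommGroup E] [NormedSpace ℝ E]
    (f : ℝ × ℝ → E) (z : ℝ × ℝ) : E := fderiv ℝ f z (0, 1)

/-- Canonical Poisson bracket `{F,G} = ∂_q F ∂_p G - ∂_p F ∂_q G = ω(X_F, X_G)`. -/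
noncomputable def pb (F G : ℝ × ℝ → ℝ) (z : ℝ × ℝ) : ℝ :=
  pd1 F z * pd2 G z - pd2 F z * pd1 G z

/-- `φ_F = F - ι_{X_F} A`, where `A = p dq`, `X_F = (∂_p F, -∂_q F)`, so `ι_{X_F}A = p ∂_p F`. -/
noncomputable def phiOf (F : ℝ × ℝ → ℝ) (z : ℝ × ℝ) : ℝ := F z - z.2 * pd2 F z

/-!
In canonical coordinates `(q, p)` one has `A = p dq`, `X_F = (∂_p F, -∂_q F)` and
`ι_{X_F} A = p ∂_p F`. Expanding by the Leibniz rule turns all three identities into polynomial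
identities in the first and second partial derivatives of `F` and `G`, which hold once the mixed
partials `∂_q ∂_p` and `∂_p ∂_q` are identified (Schwarz's theorem for `C²` functions).
-/

section SecondDerivative

variable {E F : Type*} [NormedAddCommGroup E] [NormedSpace ℝ E]
  [NormedAddCommGroup F] [NormedSpace ℝ F] {f : E → F}

theorem ContDiff.differentiable_fderiv (hf : ContDiff ℝ 2 f) : Differentiable ℝ (fderiv ℝ f) :=
  (hf.fderiv_right (m := 1) (by norm_num)).differentiable one_ne_zero

theorem ContDiff.differentiable_fderiv_apply (hf : ContDiff ℝ 2 f) (w : E) :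
    Differentiable ℝ (fun y => fderiv ℝ f y w) :=
  hf.differentiable_fderiv.clm_apply (differentiable_const w)

theorem fderiv_fderiv_apply_const {x : E} (hf : DifferentiableAt ℝ (fderiv ℝ f) x) (v w : E) :
    fderiv ℝ (fun y => fderiv ℝ f y w) x v = fderiv ℝ (fderiv ℝ f) x v w := by
  simp [fderiv_clm_apply hf (differentiableAt_const w)]

theorem ContDiff.fderiv_fderiv_comm (hf : ContDiff ℝ 2 f) (x v w : E) :
    fderiv ℝ (fderiv ℝ f) x v w = fderiv ℝ (fderiv ℝ f) x w v :=
  hf.contDiffAt.isSymmSndFDerivAt (by simp [minSmoothness_of_isRCLikeNormedField]) v w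

end SecondDerivative

section PhaseSpace

variable {f g : ℝ × ℝ → ℝ}

theorem fderiv_phiOf_apply (hf : ContDiff ℝ 2 f) (z v : ℝ × ℝ) :
    fderiv ℝ (phiOf f) z v = fderiv ℝ f z v -
      (v.2 * fderiv ℝ f z (0, 1) + z.2 * fderiv ℝ (fderiv ℝ f) z v (0, 1)) := by
  have hf₂ := hf.differentiable_fderiv_apply (0, 1) z
  unfold phiOf pd2
  rw [fderiv_fun_sub (hf.differentiable two_ne_zero z) (differentiableAt_snd.fun_mul hf₂),
    fderiv_fun_mul differentiableAt_snd hf₂]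
  simp only [sub_apply, add_apply, smul_apply, smul_eq_mul, fderiv_snd,
    ContinuousLinearMap.coe_snd', fderiv_fderiv_apply_const (hf.differentiable_fderiv z)]
  ring

theorem fderiv_pb_apply (hf : ContDiff ℝ 2 f) (hg : ContDiff ℝ 2 g) (z v : ℝ × ℝ) :
    fderiv ℝ (pb f g) z v =
      (fderiv ℝ (fderiv ℝ f) z v (1, 0) * fderiv ℝ g z (0, 1)
        + fderiv ℝ f z (1, 0) * fderiv ℝ (fderiv ℝ g) z v (0, 1))
      - (fderiv ℝ (fderiv ℝ f) z v (0, 1) * fderiv ℝ g z (1, 0)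
        + fderiv ℝ f z (0, 1) * fderiv ℝ (fderiv ℝ g) z v (1, 0)) := by
  have hf₁ := hf.differentiable_fderiv_apply (1, 0) z
  have hf₂ := hf.differentiable_fderiv_apply (0, 1) z
  have hg₁ := hg.differentiable_fderiv_apply (1, 0) z
  have hg₂ := hg.differentiable_fderiv_apply (0, 1) z
  unfold pb pd1 pd2
  rw [fderiv_fun_sub (hf₁.fun_mul hg₂) (hf₂.fun_mul hg₁), fderiv_fun_mul hf₁ hg₂,
    fderiv_fun_mul hf₂ hg₁]
  simp only [sub_apply, add_apply, smul_apply, smul_eq_mul,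
    fderiv_fderiv_apply_const (hf.differentiable_fderiv z),
    fderiv_fderiv_apply_const (hg.differentiable_fderiv z)]
  ring

end PhaseSpace

/-- For smooth `F, G` on `T*Q` (here `Q = ℝ`, `T*Q = ℝ²` with `A = p dq`, `ω = -dA`,
`X_F = (∂_p F, -∂_q F)`, `{F,G} = ω(X_F,X_G)`):
`d(F - ι_{X_F}A)·X_G - d(G - ι_{X_G}A)·X_F = {F,G} - ι_{X_{{F,G}}}A`
(note `dφ·X_G = {φ,G}`), and the map `F ↦ (X_F, F - ι_{X_F}A)` is a Lie algebra homomorphism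
into the semidirect-product Lie algebra with bracket
`[(X₁,φ₁),(X₂,φ₂)] = ([X₂,X₁], dφ₁·X₂ - dφ₂·X₁)`, i.e. the Jacobi–Lie bracket
`[X_G, X_F] = X_G·∇X_F - X_F·∇X_G` equals `X_{{F,G}}` componentwise. -/
theorem statement0 (F G : ℝ × ℝ → ℝ) (hF : ContDiff ℝ ∞ F) (hG : ContDiff ℝ ∞ G) :
    -- function part: d(φ_F)·X_G - d(φ_G)·X_F = {F,G} - p ∂_p {F,G}
    (∀ z : ℝ × ℝ,
      pb (phiOf F) G z - pb (phiOf G) F z = pb F G z - z.2 * pd2 (pb F G) z) ∧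
    -- first component of [X_G, X_F] = X_{{F,G}}
    (∀ z : ℝ × ℝ,
      (pd2 G z * pd1 (fun w => pd2 F w) z + (-(pd1 G z)) * pd2 (fun w => pd2 F w) z)
        - (pd2 F z * pd1 (fun w => pd2 G w) z + (-(pd1 F z)) * pd2 (fun w => pd2 G w) z)
        = pd2 (pb F G) z) ∧
    -- second component of [X_G, X_F] = X_{{F,G}}
    (∀ z : ℝ × ℝ,
      (pd2 G z * pd1 (fun w => -(pd1 F w)) z + (-(pd1 G z)) * pd2 (fun w => -(pd1 F w)) z)
        - (pd2 F z * pd1 (fun w => -(pd1 G w)) z + (-(pd1 F z)) * pd2 (fun w => -(pd1 G w)) z)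
        = -(pd1 (pb F G) z)) := by
  have hF₂ : ContDiff ℝ 2 F := hF.of_le (by norm_cast)
  have hG₂ : ContDiff ℝ 2 G := hG.of_le (by norm_cast)
  refine ⟨fun z => ?_, fun z => ?_, fun z => ?_⟩ <;>
  · simp only [pb, pd1, pd2, fderiv_fun_neg, neg_apply,
      fderiv_fderiv_apply_const (hF₂.differentiable_fderiv _),
      fderiv_fderiv_apply_const (hG₂.differentiable_fderiv _),
      fderiv_phiOf_apply hF₂, fderiv_phiOf_apply hG₂, fderiv_pb_apply hF₂ hG₂,
      hF₂.fderiv_fderiv_comm z (1, 0) (0, 1), hG₂.fderiv_fderiv_comm z (1, 0) (0, 1)]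
    ring
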